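/- arXiv:2309.11972 — 3 statements merged into one kernel-verified Lean document; each statement's English description precedes it below -/
import Mathlib

section
/- Let n, q, f be natural numbers with q ≤ n, f ≤ n, and f ≥ 2q − n (in integer arithmetic). Then there exist finite subsets Q₁, Q₂, F of Fin n with |Q₁| = q, |Q₂| = q, |F| ≤ f, and (Q₁ ∩ Q₂) \ F = ∅. -/
/-- Tightness direction of Theorem 2 (ROLL-type trade-off for dynamic
arbiters): if `q ≤ n`, `f ≤ n` and `2·(n − q) + f ≥ n`, then there are
quorums `Q₁`, `Q₂` of size `q` and a set `F` of at most `f` faulty writers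
such that no non-faulty writer lies in both quorums:
`(Q₁ ∩ Q₂) \ F = ∅`. -/
theorem dynamic_arbiter_tightness (n q f : ℕ)
    (hq : q ≤ n) (hf : f ≤ n) (hroll : 2 * (n - q) + f ≥ n) :
    ∃ Q₁ Q₂ F : Finset (Fin n),
      Q₁.card = q ∧ Q₂.card = q ∧ F.card ≤ f ∧ (Q₁ ∩ Q₂) \ F = ∅ := by
  have h1 : ∀ m ∈ Finset.range q, m < n := fun m hm =>
    lt_of_lt_of_le (Finset.mem_range.mp hm) hq
  have h2 : ∀ m ∈ Finset.Ico (n - q) n, m < n := fun m hm =>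
    (Finset.mem_Ico.mp hm).2
  have h3 : ∀ m ∈ Finset.Ico (n - q) q, m < n := fun m hm =>
    lt_of_lt_of_le (Finset.mem_Ico.mp hm).2 hq
  refine ⟨(Finset.range q).attachFin h1, (Finset.Ico (n - q) n).attachFin h2,
    (Finset.Ico (n - q) q).attachFin h3, ?_, ?_, ?_, ?_⟩
  · simp [Finset.card_attachFin]
  · simp [Finset.card_attachFin, Nat.card_Ico, Nat.sub_sub_self hq]
  · rw [Finset.card_attachFin, Nat.card_Ico]
    omega
  · ext a
    simp only [Finset.mem_sdiff, Finset.mem_inter, Finset.mem_attachFin,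
      Finset.mem_range, Finset.mem_Ico, Finset.notMem_empty, iff_false]
    omega
end

section
/- Let n, q, f be natural numbers, let Q be a finite subset of Fin n with |Q| ≥ q, and let F be a finite subset of Fin n with |F| ≤ f. If (n − q) + f ≤ ⌈(n−1)/2⌉ (the number of writers without the fact plus the number of faulty writers is at most the minority), then |Q \ F| ≥ n − ⌈(n−1)/2⌉ = ⌈n/2⌉; that is, at least ⌈n/2⌉ non-faulty writers hold the fact of the static arbiter. (This is the paper's Theorem 3 on static arbiters.) -/
/-- Theorem 3 (static arbiters): if the quorum `Q` has size at least `q`,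
the faulty set `F` has size at most `f`, and
`(n − q) + f ≤ ⌈(n−1)/2⌉` (in Lean's natural-number division,
`⌈(n−1)/2⌉ = (n - 1 + 1) / 2`), then at least
`n − ⌈(n−1)/2⌉ = ⌈n/2⌉ = (n + 1) / 2` non-faulty writers hold the fact of
the static arbiter: `|Q \ F| ≥ (n + 1) / 2`. -/
theorem static_arbiter_guarantee (n q f : ℕ)
    (Q : Finset (Fin n)) (hQ : Q.card ≥ q)
    (F : Finset (Fin n)) (hF : F.card ≤ f)
    (h : (n - q) + f ≤ (n - 1 + 1) / 2) :
    (Q \ F).card ≥ (n + 1) / 2 := by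
  have h1 : Q.card ≤ n := by
    simpa using Finset.card_le_card (Finset.subset_univ Q)
  have h2 : Q.card - F.card ≤ (Q \ F).card := Finset.le_card_sdiff F Q
  omega
end

section
/- Let n, q, f be natural numbers with f ≤ q ≤ n and 2·(q − f) ≤ n. Then there exist finite subsets Q₁, Q₂, F₁, F₂ of Fin n with |Q₁| = q, |Q₂| = q, |F₁| = f, |F₂| = f, F₁ ⊆ Q₁, F₂ ⊆ Q₂, and (Q₁ \ F₁) ∩ (Q₂ \ F₂) = ∅. (This is the split-brain construction for static arbiters from the proof of Lemma 1: if a static arbiter can be decided with at most half of the writers agreeing and surviving, two groups of writers can simultaneously decide two different static arbiters.) -/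
/-- Split-brain construction for static arbiters: if `f ≤ q ≤ n` and
`2·(q − f) ≤ n`, then there are quorums `Q₁`, `Q₂` of size `q` with faulty
subsets `F₁ ⊆ Q₁`, `F₂ ⊆ Q₂` of size `f` such that the two agreeing
surviving groups are disjoint: `(Q₁ \ F₁) ∩ (Q₂ \ F₂) = ∅`. -/
theorem static_arbiter_split_brain (n q f : ℕ)
    (hfq : f ≤ q) (hqn : q ≤ n) (h : 2 * (q - f) ≤ n) :
    ∃ Q₁ Q₂ F₁ F₂ : Finset (Fin n),
      Q₁.card = q ∧ Q₂.card = q ∧ F₁.card = f ∧ F₂.card = f ∧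
      F₁ ⊆ Q₁ ∧ F₂ ⊆ Q₂ ∧ (Q₁ \ F₁) ∩ (Q₂ \ F₂) = ∅ := by
  set s := q - f with hs
  have hsn : s ≤ n := le_trans (Nat.sub_le _ _) hqn
  have hcardu : (Finset.univ : Finset (Fin n)).card = n := by simp
  -- A : survivors of Q₁
  obtain ⟨A, -, hA⟩ := Finset.exists_subset_card_eq (s := (Finset.univ : Finset (Fin n))) (n := s) (by simpa using hsn)
  have hAc : Aᶜ.card = n - s := by
    rw [Finset.card_compl, hA, Fintype.card_fin]
  -- B : survivors of Q₂, disjoint from A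
  have hsB : s ≤ Aᶜ.card := by
    rw [hAc]; omega
  obtain ⟨B, hBsub, hB⟩ := Finset.exists_subset_card_eq (s := Aᶜ) (n := s) hsB
  have hfA : f ≤ Aᶜ.card := by rw [hAc]; omega
  obtain ⟨F₁, hF₁sub, hF₁⟩ := Finset.exists_subset_card_eq (s := Aᶜ) (n := f) hfA
  have hBc : Bᶜ.card = n - s := by
    rw [Finset.card_compl, hB, Fintype.card_fin]
  have hfB : f ≤ Bᶜ.card := by rw [hBc]; omega
  obtain ⟨F₂, hF₂sub, hF₂⟩ := Finset.exists_subset_card_eq (s := Bᶜ) (n := f) hfB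
  have hdAF₁ : Disjoint A F₁ :=
    Finset.disjoint_left.mpr fun x hxA hxF => (Finset.mem_compl.mp (hF₁sub hxF)) hxA
  have hdBF₂ : Disjoint B F₂ :=
    Finset.disjoint_left.mpr fun x hxB hxF => (Finset.mem_compl.mp (hF₂sub hxF)) hxB
  have hdAB : Disjoint A B :=
    Finset.disjoint_left.mpr fun x hxA hxB => (Finset.mem_compl.mp (hBsub hxB)) hxA
  refine ⟨A ∪ F₁, B ∪ F₂, F₁, F₂, ?_, ?_, hF₁, hF₂, Finset.subset_union_right,
    Finset.subset_union_right, ?_⟩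
  · rw [Finset.card_union_of_disjoint hdAF₁, hA, hF₁]; omega
  · rw [Finset.card_union_of_disjoint hdBF₂, hB, hF₂]; omega
  · have h1 : (A ∪ F₁) \ F₁ = A := by
      rw [Finset.union_sdiff_right, Finset.sdiff_eq_self_of_disjoint hdAF₁]
    have h2 : (B ∪ F₂) \ F₂ = B := by
      rw [Finset.union_sdiff_right, Finset.sdiff_eq_self_of_disjoint hdBF₂]
    rw [h1, h2, Finset.disjoint_iff_inter_eq_empty.mp hdAB]
end
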